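/- arXiv:1509.01641 — 6 statements merged into one kernel-verified Lean document; each statement's English description precedes it below -/
import Mathlib

section
/- Let x₀ ≠ y₀ in ℝⁿ, let e be a unit vector orthogonal to N(x₀,y₀), r₀ = ‖y₀-x₀‖, and s ∈ [0, r₀]. Then the derivative at t = 0 of t ↦ θ(s, x₀ + t·e, y₀ - t·e), where θ(s,x,y) = x + s·N(x,y), equals (1 - 2s/r₀)·e. -/
/-! The chord `(y₀ - t • e) - (x₀ + t • e) = (y₀ - x₀) - (2 * t) • e` moves orthogonally to itself
at `t = 0`, so its length is stationary there and its direction moves with velocity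
`-(2 / ‖y₀ - x₀‖) • e`; adding the velocity `e` of the base point gives the result. -/

open scoped RealInnerProductSpace

section Normalize

variable {E : Type*} [NormedAddCommGroup E] [InnerProductSpace ℝ E] {g : ℝ → E} {g' : E} {t : ℝ}

theorem HasDerivAt.norm (hg : HasDerivAt g g' t) (h0 : g t ≠ 0) :
    HasDerivAt (fun u => ‖g u‖) (⟪g t, g'⟫ / ‖g t‖) t := by
  have hsq : ‖g t‖ ^ 2 ≠ 0 := pow_ne_zero 2 (norm_ne_zero_iff.2 h0)
  have hsqrt := (Real.hasDerivAt_sqrt hsq).comp t hg.norm_sq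
  simp only [Function.comp_def, Real.sqrt_sq (norm_nonneg _)] at hsqrt
  refine hsqrt.congr_deriv ?_
  field_simp

theorem HasDerivAt.norm_inv_smul_of_inner_eq_zero (hg : HasDerivAt g g' t) (h0 : g t ≠ 0)
    (horth : ⟪g t, g'⟫ = 0) :
    HasDerivAt (fun u => ‖g u‖⁻¹ • g u) (‖g t‖⁻¹ • g') t := by
  have hnorm : HasDerivAt (fun u => ‖g u‖) 0 t := by
    simpa [horth] using hg.norm h0
  have hinv := hnorm.inv (norm_ne_zero_iff.2 h0)
  exact hinv.smul hg |>.congr_deriv (by simp)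

end Normalize

theorem stmt3_general {n : ℕ} (x₀ y₀ : EuclideanSpace ℝ (Fin n)) (hxy : x₀ ≠ y₀)
    (e : EuclideanSpace ℝ (Fin n))
    (horth : (inner ℝ e (‖y₀ - x₀‖⁻¹ • (y₀ - x₀)) : ℝ) = 0)
    (s : ℝ) :
    deriv (fun t : ℝ =>
      (x₀ + t • e) + s • (‖(y₀ - t • e) - (x₀ + t • e)‖⁻¹ • ((y₀ - t • e) - (x₀ + t • e)))) 0
      = (1 - 2 * s / ‖y₀ - x₀‖) • e := by
  have hv : y₀ - x₀ ≠ 0 := sub_ne_zero.2 hxy.symm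
  have hx : HasDerivAt (fun t : ℝ => x₀ + t • e) e 0 := by
    simpa using ((hasDerivAt_id (0 : ℝ)).smul_const e).const_add x₀
  have hy : HasDerivAt (fun t : ℝ => y₀ - t • e) (-e) 0 := by
    simpa using ((hasDerivAt_id (0 : ℝ)).smul_const e).const_sub y₀
  have hdiff : HasDerivAt (fun t : ℝ => (y₀ - t • e) - (x₀ + t • e)) (-e - e) 0 := hy.sub hx
  have hev : ⟪y₀ - x₀, e⟫ = 0 := by
    rw [real_inner_comm]
    simpa [inner_smul_right, hv] using horth
  have hN := hdiff.norm_inv_smul_of_inner_eq_zero (by simpa using hv)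
    (by simp [inner_sub_right, inner_neg_right, hev])
  refine (hx.add (hN.const_smul s)).deriv.trans ?_
  simp only [zero_smul, sub_zero, add_zero]
  module

theorem stmt3 {n : ℕ} (x₀ y₀ : EuclideanSpace ℝ (Fin n)) (hxy : x₀ ≠ y₀)
    (e : EuclideanSpace ℝ (Fin n)) (he : ‖e‖ = 1)
    (horth : (inner ℝ e (‖y₀ - x₀‖⁻¹ • (y₀ - x₀)) : ℝ) = 0)
    (s : ℝ) (hs : s ∈ Set.Icc 0 ‖y₀ - x₀‖) :
    deriv (fun t : ℝ =>
      (x₀ + t • e) + s • (‖(y₀ - t • e) - (x₀ + t • e)‖⁻¹ • ((y₀ - t • e) - (x₀ + t • e)))) 0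
      = (1 - 2 * s / ‖y₀ - x₀‖) • e :=
  stmt3_general x₀ y₀ hxy e horth s
end

section
/- Let τ be a smooth symmetric (0,2)-tensor field on ℝⁿ, x₀ ≠ y₀, eₙ = N(x₀,y₀). Then the derivative at t = 0 of t ↦ E_τ(x₀ + t eₙ, y₀ - t eₙ) equals E_{D_{eₙ}τ}(x₀,y₀) - 2τ(y₀)(eₙ,eₙ), where E_τ is the line segment energy and D_{eₙ}τ is the directional derivative of τ. -/
noncomputable def segE {n : ℕ}
    (τ : EuclideanSpace ℝ (Fin n) →
      (EuclideanSpace ℝ (Fin n) →L[ℝ] EuclideanSpace ℝ (Fin n) →L[ℝ] ℝ))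
    (x y : EuclideanSpace ℝ (Fin n)) : ℝ :=
  ∫ s in (0:ℝ)..‖y - x‖,
    τ (x + s • (‖y - x‖⁻¹ • (y - x))) (‖y - x‖⁻¹ • (y - x)) (‖y - x‖⁻¹ • (y - x))

theorem stmt6 {n : ℕ}
    (τ : EuclideanSpace ℝ (Fin n) →
      (EuclideanSpace ℝ (Fin n) →L[ℝ] EuclideanSpace ℝ (Fin n) →L[ℝ] ℝ))
    (hτ : ContDiff ℝ (⊤ : ℕ∞) τ) (hsym : ∀ z u w, τ z u w = τ z w u)
    (x₀ y₀ : EuclideanSpace ℝ (Fin n)) (hxy : x₀ ≠ y₀)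
    (eₙ : EuclideanSpace ℝ (Fin n)) (heₙ : eₙ = ‖y₀ - x₀‖⁻¹ • (y₀ - x₀)) :
    deriv (fun t : ℝ => segE τ (x₀ + t • eₙ) (y₀ - t • eₙ)) 0
      = segE (fun z => fderiv ℝ τ z eₙ) x₀ y₀ - 2 * τ y₀ eₙ eₙ := by
  have hyx0 : y₀ - x₀ ≠ 0 := sub_ne_zero.2 (Ne.symm hxy)
  set L : ℝ := ‖y₀ - x₀‖ with hLdef
  have hL : 0 < L := norm_pos_iff.2 hyx0
  have hen : ‖eₙ‖ = 1 := by
    rw [heₙ, norm_smul, norm_inv, norm_norm, ← hLdef, inv_mul_cancel₀ hL.ne']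
  have hyx : y₀ - x₀ = L • eₙ := by
    rw [heₙ, smul_smul, mul_inv_cancel₀ hL.ne', one_smul]
  set f : ℝ → ℝ := fun u => τ (x₀ + u • eₙ) eₙ eₙ with hfdef
  have hτd := hτ.differentiable (by simp)
  have hcurve : ∀ u : ℝ, HasDerivAt (fun u : ℝ => x₀ + u • eₙ) eₙ u := by
    intro u
    simpa using ((hasDerivAt_id u).smul_const eₙ).const_add x₀
  have hf_deriv : ∀ u : ℝ, HasDerivAt f ((fderiv ℝ τ (x₀ + u • eₙ) eₙ) eₙ eₙ) u := by
    intro u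
    have h1 : HasDerivAt (fun u : ℝ => τ (x₀ + u • eₙ)) (fderiv ℝ τ (x₀ + u • eₙ) eₙ) u :=
      (hτd _).hasFDerivAt.comp_hasDerivAt u (hcurve u)
    have h2 := h1.clm_apply (hasDerivAt_const u eₙ)
    simpa using h2.clm_apply (hasDerivAt_const u eₙ)
  have hf_cont : Continuous f := continuous_iff_continuousAt.2 fun u => (hf_deriv u).continuousAt
  set F : ℝ → ℝ := fun t => ∫ u in (0:ℝ)..t, f u with hFdef
  have hF : ∀ t : ℝ, HasDerivAt F (f t) t := fun t =>
    intervalIntegral.integral_hasDerivAt_right (hf_cont.intervalIntegrable _ _)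
      (hf_cont.stronglyMeasurableAtFilter _ _) hf_cont.continuousAt
  have hev : (fun t : ℝ => segE τ (x₀ + t • eₙ) (y₀ - t • eₙ)) =ᶠ[nhds 0]
      fun t => F (L - t) - F t := by
    have hmem : Set.Iio (L / 2) ∈ nhds (0 : ℝ) := Iio_mem_nhds (by linarith)
    filter_upwards [hmem] with t ht
    have h2t : 0 < L - 2 * t := by
      simp only [Set.mem_Iio] at ht; linarith
    have hsub : y₀ - t • eₙ - (x₀ + t • eₙ) = (L - 2 * t) • eₙ := by
      have h : y₀ - t • eₙ - (x₀ + t • eₙ) = y₀ - x₀ - (2 * t) • eₙ := by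
        rw [two_mul, add_smul]; abel
      rw [h, hyx, ← sub_smul]
    have hnorm : ‖y₀ - t • eₙ - (x₀ + t • eₙ)‖ = L - 2 * t := by
      rw [hsub, norm_smul, hen, mul_one, Real.norm_eq_abs, abs_of_pos h2t]
    have hdir : ‖y₀ - t • eₙ - (x₀ + t • eₙ)‖⁻¹ • (y₀ - t • eₙ - (x₀ + t • eₙ)) = eₙ := by
      rw [hnorm, hsub, smul_smul, inv_mul_cancel₀ h2t.ne', one_smul]
    show segE τ (x₀ + t • eₙ) (y₀ - t • eₙ) = _
    rw [segE, hdir, hnorm]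
    have hpt : ∀ s : ℝ, x₀ + t • eₙ + s • eₙ = x₀ + (s + t) • eₙ := by
      intro s; rw [add_smul]; abel
    simp_rw [hpt]
    have : (∫ s in (0:ℝ)..(L - 2 * t), τ (x₀ + (s + t) • eₙ) eₙ eₙ)
        = ∫ s in (0:ℝ)..(L - 2 * t), f (s + t) := rfl
    rw [this, intervalIntegral.integral_comp_add_right f t, zero_add,
      show L - 2 * t + t = L - t by ring]
    exact (intervalIntegral.integral_interval_sub_left (hf_cont.intervalIntegrable _ _)
      (hf_cont.intervalIntegrable _ _)).symm
  rw [hev.deriv_eq]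
  have h1 : HasDerivAt (fun t : ℝ => L - t) (-1) 0 := by
    simpa using (hasDerivAt_id' (0:ℝ)).const_sub L
  have h2 : HasDerivAt (fun t : ℝ => F (L - t)) (f L * (-1)) 0 := by
    have := (hF (L - 0)).comp 0 h1
    rw [sub_zero] at this
    exact this
  have hD : HasDerivAt (fun t : ℝ => F (L - t) - F t) (f L * (-1) - f 0) 0 := h2.sub (hF 0)
  rw [hD.deriv]
  have hy : y₀ = x₀ + L • eₙ := by rw [← hyx]; abel
  have hτy : τ y₀ eₙ eₙ = f L := by rw [hfdef]; simp [← hy]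
  have hfC : ContDiff ℝ (⊤ : ℕ∞) f :=
    ((hτ.comp (contDiff_const.add (contDiff_id.smul contDiff_const))).clm_apply contDiff_const).clm_apply contDiff_const
  have hcont' : Continuous fun s : ℝ => (fderiv ℝ τ (x₀ + s • eₙ) eₙ) eₙ eₙ := by
    convert hfC.continuous_deriv (by simp) using 1
    funext s; exact ((hf_deriv s).deriv).symm
  have hRHS : segE (fun z => fderiv ℝ τ z eₙ) x₀ y₀ = f L - f 0 := by
    rw [segE, ← hLdef, ← heₙ]
    have := intervalIntegral.integral_eq_sub_of_hasDerivAt (f := f)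
      (f' := fun s => (fderiv ℝ τ (x₀ + s • eₙ) eₙ) eₙ eₙ) (a := 0) (b := L)
      (fun x _ => hf_deriv x) (hcont'.intervalIntegrable _ _)
    exact this
  rw [hRHS, hτy]
  ring
end

section
/- Let τ be a smooth symmetric (0,2)-tensor field on ℝⁿ, x₀ ≠ y₀, and e a unit vector orthogonal to eₙ = N(x₀,y₀), r₀ = ‖y₀-x₀‖. Then the derivative at t = 0 of t ↦ E_τ(x₀ + t e, y₀ - t e) equals E_{D_e τ}(x₀,y₀) - (2/r₀)·∫₀^{r₀} [s·(D_e τ)(θ(s))(eₙ,eₙ) + 2τ(θ(s))(e,eₙ)] ds, where θ(s) = x₀ + s·eₙ. -/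
open scoped RealInnerProductSpace
open MeasureTheory intervalIntegral Metric Asymptotics
open scoped Topology Interval

set_option maxHeartbeats 1000000 in
theorem stmt7 {n : ℕ}
    (τ : EuclideanSpace ℝ (Fin n) →
      (EuclideanSpace ℝ (Fin n) →L[ℝ] EuclideanSpace ℝ (Fin n) →L[ℝ] ℝ))
    (hτ : ContDiff ℝ (⊤ : ℕ∞) τ) (hsym : ∀ z u w, τ z u w = τ z w u)
    (x₀ y₀ : EuclideanSpace ℝ (Fin n)) (hxy : x₀ ≠ y₀)
    (eₙ : EuclideanSpace ℝ (Fin n)) (heₙ : eₙ = ‖y₀ - x₀‖⁻¹ • (y₀ - x₀))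
    (e : EuclideanSpace ℝ (Fin n)) (he : ‖e‖ = 1) (horth : (inner ℝ e eₙ : ℝ) = 0) :
    deriv (fun t : ℝ => segE τ (x₀ + t • e) (y₀ - t • e)) 0
      = segE (fun z => fderiv ℝ τ z e) x₀ y₀
        - (2 / ‖y₀ - x₀‖) * ∫ s in (0:ℝ)..‖y₀ - x₀‖,
            (s * (fderiv ℝ τ (x₀ + s • eₙ) e) eₙ eₙ + 2 * τ (x₀ + s • eₙ) e eₙ) := by
  have hr : (0:ℝ) < ‖y₀ - x₀‖ := norm_pos_iff.mpr (sub_ne_zero.mpr (Ne.symm hxy))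
  set r : ℝ := ‖y₀ - x₀‖ with hr_def
  -- orthogonality
  have hinner : (inner ℝ (y₀ - x₀) e : ℝ) = 0 := by
    rw [heₙ, inner_smul_right] at horth
    rcases mul_eq_zero.mp horth with h | h
    · exact absurd h (inv_ne_zero hr.ne')
    · rw [real_inner_comm]; exact h
  set v : ℝ → EuclideanSpace ℝ (Fin n) := fun t => (y₀ - t • e) - (x₀ + t • e) with hv_def
  have hv_eq : ∀ t, v t = (y₀ - x₀) - (2*t) • e := by
    intro t
    simp only [hv_def]
    rw [two_mul, add_smul]
    abel
  have hnorm : ∀ t, ‖v t‖ = Real.sqrt (r^2 + 4*t^2) := by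
    intro t
    have h1 : ‖v t‖^2 = r^2 + 4*t^2 := by
      rw [hv_eq, norm_sub_sq_real, inner_smul_right, hinner, norm_smul, he,
        Real.norm_eq_abs, mul_one, sq_abs]
      ring
    rw [← Real.sqrt_sq (norm_nonneg (v t)), h1]
  have hrle : ∀ t, r ≤ ‖v t‖ := by
    intro t
    calc r = Real.sqrt (r^2) := (Real.sqrt_sq hr.le).symm
      _ ≤ Real.sqrt (r^2 + 4*t^2) := Real.sqrt_le_sqrt (by nlinarith [sq_nonneg t])
      _ = ‖v t‖ := (hnorm t).symm
  have hvpos : ∀ t, (0:ℝ) < ‖v t‖ := fun t => lt_of_lt_of_le hr (hrle t)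
  have hv' : ∀ t, HasDerivAt v ((-2:ℝ) • e) t := by
    intro t
    have h1 : HasDerivAt (fun u : ℝ => u • e) ((1:ℝ) • e) t := (hasDerivAt_id t).smul_const e
    have h2 := ((hasDerivAt_const t y₀).sub h1).sub ((hasDerivAt_const t x₀).add h1)
    refine h2.congr_deriv ?_
    module
  have hh : ∀ t, HasDerivAt (fun u => ‖v u‖) (4*t / ‖v t‖) t := by
    intro t
    have hfun : (fun u => ‖v u‖) = fun u => Real.sqrt (r^2 + 4*u^2) := funext hnorm
    rw [hfun]
    have hq : HasDerivAt (fun u : ℝ => r^2 + 4*u^2) (8*t) t := by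
      have := (hasDerivAt_const t (r^2)).add (((hasDerivAt_pow 2 t)).const_mul 4)
      refine this.congr_deriv ?_
      simp; ring
    have hne : r^2 + 4*t^2 ≠ 0 := by positivity
    have := (Real.hasDerivAt_sqrt hne).comp t hq
    refine this.congr_deriv (Eq.symm ?_)
    rw [hnorm t]
    field_simp
    ring
  set N : ℝ → EuclideanSpace ℝ (Fin n) := fun t => ‖v t‖⁻¹ • v t with hN_def
  have hNunit : ∀ t, ‖N t‖ = 1 := by
    intro t
    rw [hN_def]
    simp [norm_smul, abs_of_pos (inv_pos.mpr (hvpos t)), inv_mul_cancel₀ (hvpos t).ne']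
  set dN : ℝ → EuclideanSpace ℝ (Fin n) :=
    fun t => ‖v t‖⁻¹ • ((-2:ℝ) • e) + (-(4*t / ‖v t‖) / ‖v t‖ ^ 2) • v t with hdN_def
  have hNd : ∀ t, HasDerivAt N (dN t) t := fun t => ((hh t).inv (hvpos t).ne').smul (hv' t)
  set θ : ℝ → ℝ → EuclideanSpace ℝ (Fin n) := fun t s => (x₀ + t • e) + s • N t with hθ_def
  have hθd : ∀ t s, HasDerivAt (fun u => θ u s) (e + s • dN t) t := by
    intro t s
    have h1 : HasDerivAt (fun u : ℝ => u • e) ((1:ℝ) • e) t := (hasDerivAt_id t).smul_const e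
    have := ((hasDerivAt_const t x₀).add h1).add ((hNd t).const_smul s)
    refine this.congr_deriv ?_
    simp
  set F : ℝ → ℝ → ℝ := fun t s => τ (θ t s) (N t) (N t) with hF_def
  set F' : ℝ → ℝ → ℝ := fun t s =>
    ((fderiv ℝ τ (θ t s) (e + s • dN t)) (N t) + τ (θ t s) (dN t)) (N t)
      + (τ (θ t s) (N t)) (dN t) with hF'_def
  have hFd : ∀ t s, HasDerivAt (fun u => F u s) (F' t s) t := by
    intro t s
    have hA : HasDerivAt (fun u => τ (θ u s)) (fderiv ℝ τ (θ t s) (e + s • dN t)) t := by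
      have hd := (hτ.differentiable (by simp) (θ t s)).hasFDerivAt
      exact hd.comp_hasDerivAt t (hθd t s)
    exact (hA.clm_apply (hNd t)).clm_apply (hNd t)
  -- continuity in s
  have hθc : ∀ t, Continuous (fun s => θ t s) :=
    fun t => continuous_const.add (continuous_id.smul continuous_const)
  have hFc : ∀ t, Continuous (fun s => F t s) := fun t =>
    ((hτ.continuous.comp (hθc t)).clm_apply continuous_const).clm_apply continuous_const
  have hfderivc := hτ.continuous_fderiv (by simp)
  have hτc : Continuous τ := hτ.continuous
  have hF'c : ∀ t, Continuous (fun s => F' t s) := by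
    intro t
    have h1 : Continuous (fun s : ℝ => (fderiv ℝ τ (θ t s) (e + s • dN t)) (N t)) :=
      ((hfderivc.comp (hθc t)).clm_apply
        (continuous_const.add (continuous_id.smul continuous_const))).clm_apply continuous_const
    have h2 : Continuous (fun s : ℝ => τ (θ t s) (dN t)) :=
      (hτc.comp (hθc t)).clm_apply continuous_const
    have h3 : Continuous (fun s : ℝ => (τ (θ t s) (N t)) (dN t)) :=
      ((hτc.comp (hθc t)).clm_apply continuous_const).clm_apply continuous_const
    exact ((h1.add h2).clm_apply continuous_const).add h3
  -- bounds
  obtain ⟨C₂, hC₂⟩ := (isCompact_closedBall x₀ (r+3)).exists_bound_of_continuousOn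
    (f := τ) hτc.continuousOn
  obtain ⟨C₃, hC₃⟩ := (isCompact_closedBall x₀ (r+3)).exists_bound_of_continuousOn
    hfderivc.continuousOn
  have hx₀mem : x₀ ∈ closedBall x₀ (r+3) := mem_closedBall_self (by positivity)
  have hC₂0 : 0 ≤ C₂ := le_trans (norm_nonneg _) (hC₂ x₀ hx₀mem)
  have hC₃0 : 0 ≤ C₃ := le_trans (norm_nonneg _) (hC₃ x₀ hx₀mem)
  set C₁ : ℝ := 2/r + 4/r^2 with hC₁_def
  have hC₁0 : 0 ≤ C₁ := by positivity
  have hdNb : ∀ t : ℝ, |t| ≤ 1 → ‖dN t‖ ≤ C₁ := by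
    intro t ht
    have hpos := hvpos t
    have hle := hrle t
    have h1 : ‖‖v t‖⁻¹ • ((-2:ℝ) • e)‖ = 2 / ‖v t‖ := by
      rw [norm_smul, norm_smul, he, Real.norm_eq_abs, Real.norm_eq_abs,
        abs_of_pos (inv_pos.mpr hpos)]
      rw [show |(-2:ℝ)| = 2 by norm_num]
      field_simp
    have h2 : ‖(-(4*t / ‖v t‖) / ‖v t‖ ^ 2) • v t‖ = 4*|t| / ‖v t‖^2 := by
      rw [norm_smul, Real.norm_eq_abs, abs_div, abs_neg, abs_div,
        abs_of_pos hpos, abs_of_pos (pow_pos hpos 2), abs_mul,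
        show |(4:ℝ)| = 4 by norm_num]
      field_simp
    calc ‖dN t‖ ≤ ‖‖v t‖⁻¹ • ((-2:ℝ) • e)‖ + ‖(-(4*t / ‖v t‖) / ‖v t‖ ^ 2) • v t‖ :=
          norm_add_le _ _
      _ = 2 / ‖v t‖ + 4*|t| / ‖v t‖^2 := by rw [h1, h2]
      _ ≤ 2/r + 4/r^2 := by
          have i1 : 2 / ‖v t‖ ≤ 2/r := by
            apply div_le_div_of_nonneg_left (by norm_num) hr hle
          have i2 : 4*|t| / ‖v t‖^2 ≤ 4/r^2 := by
            apply div_le_div₀ (by norm_num) (by linarith [abs_nonneg t]) (by positivity)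
              (by nlinarith)
          linarith
  have hθmem : ∀ t : ℝ, |t| ≤ 1 → ∀ s : ℝ, |s| ≤ r + 2 →
      θ t s ∈ closedBall x₀ (r+3) := by
    intro t ht s hs
    rw [mem_closedBall, dist_eq_norm]
    have : θ t s - x₀ = t • e + s • N t := by
      simp only [hθ_def]
      abel
    rw [this]
    calc ‖t • e + s • N t‖ ≤ ‖t • e‖ + ‖s • N t‖ := norm_add_le _ _
      _ = |t| + |s| := by rw [norm_smul, norm_smul, he, hNunit, Real.norm_eq_abs,
            Real.norm_eq_abs, mul_one, mul_one]
      _ ≤ r + 3 := by linarith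
  set M : ℝ := C₃*(1 + r*C₁) + C₂*C₁ + C₂*C₁ with hM_def
  have hF'b : ∀ t : ℝ, |t| ≤ 1 → ∀ s ∈ Set.uIoc (0:ℝ) r, ‖F' t s‖ ≤ M := by
    intro t ht s hs
    rw [Set.uIoc_of_le hr.le] at hs
    have hs1 : |s| ≤ r + 2 := by rw [abs_of_pos hs.1]; linarith [hs.2]
    have hz := hθmem t ht s hs1
    have hτb := hC₂ _ hz
    have hfb := hC₃ _ hz
    have hdN := hdNb t ht
    have hedN : ‖e + s • dN t‖ ≤ 1 + r*C₁ := by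
      calc ‖e + s • dN t‖ ≤ ‖e‖ + ‖s • dN t‖ := norm_add_le _ _
        _ = 1 + |s| * ‖dN t‖ := by rw [he, norm_smul, Real.norm_eq_abs]
        _ ≤ 1 + r * C₁ := by
            have h1 : |s| ≤ r := by rw [abs_of_pos hs.1]; exact hs.2
            have := mul_le_mul h1 hdN (norm_nonneg _) hr.le
            linarith
    have hτdN : ‖τ (θ t s)‖ * ‖dN t‖ ≤ C₂ * C₁ := mul_le_mul hτb hdN (norm_nonneg _) hC₂0
    have hX : ‖fderiv ℝ τ (θ t s) (e + s • dN t) (N t) + τ (θ t s) (dN t)‖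
        ≤ C₃*(1 + r*C₁) + C₂*C₁ := by
      calc ‖fderiv ℝ τ (θ t s) (e + s • dN t) (N t) + τ (θ t s) (dN t)‖
          ≤ ‖fderiv ℝ τ (θ t s) (e + s • dN t) (N t)‖ + ‖τ (θ t s) (dN t)‖ := norm_add_le _ _
        _ ≤ C₃ * (1 + r*C₁) + C₂ * C₁ := by
            have hf2 := (fderiv ℝ τ (θ t s)).le_opNorm₂ (e + s • dN t) (N t)
            rw [hNunit t, mul_one] at hf2
            exact add_le_add (hf2.trans (mul_le_mul hfb hedN (norm_nonneg _) hC₃0))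
              (((τ (θ t s)).le_opNorm _).trans hτdN)
    calc ‖F' t s‖ ≤ ‖(fderiv ℝ τ (θ t s) (e + s • dN t) (N t) + τ (θ t s) (dN t)) (N t)‖
          + ‖(τ (θ t s) (N t)) (dN t)‖ := norm_add_le _ _
      _ ≤ ‖fderiv ℝ τ (θ t s) (e + s • dN t) (N t) + τ (θ t s) (dN t)‖ * ‖N t‖
          + ‖τ (θ t s)‖ * ‖N t‖ * ‖dN t‖ :=
            add_le_add (ContinuousLinearMap.le_opNorm _ _) ((τ (θ t s)).le_opNorm₂ _ _)
      _ = ‖fderiv ℝ τ (θ t s) (e + s • dN t) (N t) + τ (θ t s) (dN t)‖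
          + ‖τ (θ t s)‖ * ‖dN t‖ := by rw [hNunit t]; ring
      _ ≤ (C₃*(1 + r*C₁) + C₂*C₁) + C₂*C₁ := add_le_add hX hτdN
      _ = M := by rw [hM_def]
  -- main parametric differentiation
  have key : HasDerivAt (fun t => ∫ s in (0:ℝ)..r, F t s) (∫ s in (0:ℝ)..r, F' 0 s) 0 := by
    refine (intervalIntegral.hasDerivAt_integral_of_dominated_loc_of_deriv_le
      (F := F) (F' := F') (bound := fun _ => M) (s := ball 0 1) (ball_mem_nhds 0 one_pos) ?_ ?_ ?_ ?_ ?_ ?_).2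
    · exact Filter.Eventually.of_forall fun t => (hFc t).aestronglyMeasurable
    · exact (hFc 0).intervalIntegrable 0 r
    · exact (hF'c 0).aestronglyMeasurable
    · exact Filter.Eventually.of_forall fun s hs t ht =>
        hF'b t (le_of_lt (by simpa [Real.norm_eq_abs] using mem_ball_zero_iff.mp ht)) s hs
    · exact intervalIntegrable_const
    · exact Filter.Eventually.of_forall fun s _ t _ => hFd t s
  -- the moving endpoint contributes nothing at t = 0
  have hGint : ∀ (t a b : ℝ), IntervalIntegrable (F t) MeasureTheory.volume a b :=
    fun t a b => (hFc t).intervalIntegrable a b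
  set G : ℝ → ℝ := fun t => ∫ s in r..‖v t‖, F t s with hG_def
  have hsplit : ∀ t : ℝ, segE τ (x₀ + t • e) (y₀ - t • e) = (∫ s in (0:ℝ)..r, F t s) + G t := by
    intro t
    rw [hG_def]
    rw [intervalIntegral.integral_add_adjacent_intervals (hGint t 0 r) (hGint t r ‖v t‖)]
    rfl
  have hv0 : v 0 = y₀ - x₀ := by simp [hv_def]
  have hnv0 : ‖v 0‖ = r := by rw [hv0]
  have hvle : ∀ t : ℝ, |t| ≤ 1 → ‖v t‖ ≤ r + 2 := by
    intro t ht
    rw [hnorm t]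
    calc Real.sqrt (r^2 + 4*t^2) ≤ Real.sqrt ((r+2)^2) := by
          apply Real.sqrt_le_sqrt
          nlinarith [sq_abs t, abs_nonneg t]
      _ = r + 2 := Real.sqrt_sq (by linarith)
  have hvquad : ∀ t : ℝ, ‖v t‖ - r ≤ 2*t^2/r := by
    intro t
    rw [hnorm t]
    have h1 : Real.sqrt (r^2 + 4*t^2) ≤ r + 2*t^2/r := by
      rw [show r + 2*t^2/r = Real.sqrt ((r + 2*t^2/r)^2) from
        (Real.sqrt_sq (by positivity)).symm]
      apply Real.sqrt_le_sqrt
      have : (0:ℝ) ≤ (2*t^2/r)^2 := by positivity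
      have hexp : (r + 2*t^2/r)^2 = r^2 + 4*t^2 + (2*t^2/r)^2 := by
        field_simp
        ring
      nlinarith
    linarith
  have hG0 : HasDerivAt G 0 0 := by
    rw [hasDerivAt_iff_isLittleO]
    have hG00 : G 0 = 0 := by
      rw [hG_def]
      simp only [hnv0]
      exact intervalIntegral.integral_same
    have big : G =O[𝓝 (0:ℝ)] fun t => t^2 := by
      rw [Asymptotics.isBigO_iff]
      refine ⟨C₂ * (2/r), ?_⟩
      filter_upwards [Metric.ball_mem_nhds (0:ℝ) one_pos] with t ht
      have ht1 : |t| ≤ 1 := le_of_lt (by simpa [Real.norm_eq_abs] using mem_ball_zero_iff.mp ht)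
      have hb1 : ∀ s ∈ Set.uIoc r ‖v t‖, ‖F t s‖ ≤ C₂ := by
        intro s hs
        have hrle' := hrle t
        rw [Set.uIoc_of_le hrle'] at hs
        have hs1 : |s| ≤ r + 2 := by
          rw [abs_of_pos (lt_trans hr hs.1)]
          exact le_trans hs.2 (hvle t ht1)
        have hz := hθmem t ht1 s hs1
        calc ‖F t s‖ ≤ ‖τ (θ t s)‖ * ‖N t‖ * ‖N t‖ := (τ (θ t s)).le_opNorm₂ _ _
          _ = ‖τ (θ t s)‖ := by rw [hNunit t]; ring
          _ ≤ C₂ := hC₂ _ hz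
      have hGb : ‖G t‖ ≤ C₂ * |‖v t‖ - r| := by
        rw [hG_def]
        exact intervalIntegral.norm_integral_le_of_norm_le_const hb1
      have habs : |‖v t‖ - r| ≤ 2*t^2/r := by
        rw [abs_of_nonneg (by linarith [hrle t])]
        exact hvquad t
      calc ‖G t‖ ≤ C₂ * (2*t^2/r) :=
            le_trans hGb (mul_le_mul_of_nonneg_left habs hC₂0)
        _ = C₂ * (2/r) * t^2 := by ring
        _ ≤ C₂ * (2/r) * ‖t^2‖ := by rw [Real.norm_eq_abs, abs_of_nonneg (sq_nonneg t)]
    have small : (fun t:ℝ => t^2) =o[𝓝 (0:ℝ)] fun t => t := by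
      have h := isLittleO_pow_pow (𝕜 := ℝ) (m := 1) (n := 2) (by norm_num)
      simpa using h
    have := big.trans_isLittleO small
    simpa [hG00] using this
  have hmain2 : HasDerivAt (fun t : ℝ => segE τ (x₀ + t • e) (y₀ - t • e))
      (∫ s in (0:ℝ)..r, F' 0 s) 0 := by
    have h1 : HasDerivAt (fun t => (∫ s in (0:ℝ)..r, F t s) + G t)
        (∫ s in (0:ℝ)..r, F' 0 s) 0 := by
        have h0 := key.add hG0
        rw [add_zero] at h0
        exact h0
    exact h1.congr_of_eventuallyEq (Filter.Eventually.of_forall fun t => hsplit t)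
  rw [hmain2.deriv]
  -- evaluate F' at t = 0
  have hN0 : N 0 = eₙ := by
    rw [heₙ]
    show ‖v 0‖⁻¹ • v 0 = _
    rw [hv0]
  have hdN0 : dN 0 = (-(2/r)) • e := by
    show ‖v 0‖⁻¹ • ((-2:ℝ) • e) + (-(4*0/‖v 0‖)/‖v 0‖^2) • v 0 = _
    rw [hnv0]
    rw [show (-(4*(0:ℝ)/r)/r^2) = 0 by norm_num]
    rw [zero_smul, add_zero, smul_smul]
    congr 1
    ring
  have hθ0 : ∀ s : ℝ, θ 0 s = x₀ + s • eₙ := by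
    intro s
    show (x₀ + (0:ℝ) • e) + s • N 0 = _
    rw [hN0, zero_smul, add_zero]
  have hF'0 : ∀ s : ℝ, F' 0 s = (fderiv ℝ τ (x₀ + s • eₙ) e) eₙ eₙ
      - (2/r) * (s * (fderiv ℝ τ (x₀ + s • eₙ) e) eₙ eₙ + 2 * τ (x₀ + s • eₙ) e eₙ) := by
    intro s
    show ((fderiv ℝ τ (θ 0 s) (e + s • dN 0)) (N 0) + τ (θ 0 s) (dN 0)) (N 0)
        + (τ (θ 0 s) (N 0)) (dN 0) = _
    rw [hθ0 s, hN0, hdN0]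
    simp only [map_add, _root_.map_smul, ContinuousLinearMap.add_apply, ContinuousLinearMap.smul_apply,
      smul_eq_mul, smul_smul]
    rw [hsym _ eₙ e]
    ring
  -- continuity of the pieces
  have hzc : Continuous (fun s : ℝ => x₀ + s • eₙ) :=
    continuous_const.add (continuous_id.smul continuous_const)
  have hAc : Continuous (fun s : ℝ => (fderiv ℝ τ (x₀ + s • eₙ) e) eₙ eₙ) :=
    (((hfderivc.comp hzc).clm_apply continuous_const).clm_apply
      continuous_const).clm_apply continuous_const
  have hBc : Continuous (fun s : ℝ => τ (x₀ + s • eₙ) e eₙ) :=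
    ((hτc.comp hzc).clm_apply continuous_const).clm_apply continuous_const
  have hseg2 : segE (fun z => fderiv ℝ τ z e) x₀ y₀
      = ∫ s in (0:ℝ)..r, (fderiv ℝ τ (x₀ + s • eₙ) e) eₙ eₙ := by
    simp only [segE, ← hr_def, ← heₙ]
  calc ∫ s in (0:ℝ)..r, F' 0 s
      = ∫ s in (0:ℝ)..r, ((fderiv ℝ τ (x₀ + s • eₙ) e) eₙ eₙ
          - (2/r) * (s * (fderiv ℝ τ (x₀ + s • eₙ) e) eₙ eₙ + 2 * τ (x₀ + s • eₙ) e eₙ)) :=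
        intervalIntegral.integral_congr (fun s _ => hF'0 s)
    _ = (∫ s in (0:ℝ)..r, (fderiv ℝ τ (x₀ + s • eₙ) e) eₙ eₙ)
          - ∫ s in (0:ℝ)..r, (2/r) * (s * (fderiv ℝ τ (x₀ + s • eₙ) e) eₙ eₙ
            + 2 * τ (x₀ + s • eₙ) e eₙ) := by
        apply intervalIntegral.integral_sub (hAc.intervalIntegrable 0 r)
        exact (continuous_const.mul ((continuous_id.mul hAc).add
          (continuous_const.mul hBc))).intervalIntegrable 0 r
    _ = segE (fun z => fderiv ℝ τ z e) x₀ y₀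
          - (2/r) * ∫ s in (0:ℝ)..r, (s * (fderiv ℝ τ (x₀ + s • eₙ) e) eₙ eₙ
            + 2 * τ (x₀ + s • eₙ) e eₙ) := by
        rw [intervalIntegral.integral_const_mul, hseg2]
end

section
/- Let τ be a smooth symmetric (0,2)-tensor field on ℝⁿ, x₀ ≠ y₀, eₙ = N(x₀,y₀). Then the second derivative at t = 0 of t ↦ E_τ(x₀ + t eₙ, y₀ - t eₙ) equals E_{D_{eₙ}D_{eₙ}τ}(x₀,y₀). -/
set_option maxHeartbeats 1000000
set_option synthInstance.maxHeartbeats 400000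

lemma key_deriv {n : ℕ}
    (φ : EuclideanSpace ℝ (Fin n) →
      (EuclideanSpace ℝ (Fin n) →L[ℝ] EuclideanSpace ℝ (Fin n) →L[ℝ] ℝ))
    (hφ : ContDiff ℝ (⊤ : ℕ∞) φ) (x₀ eₙ : EuclideanSpace ℝ (Fin n)) (u : ℝ) :
    HasDerivAt (fun t : ℝ => φ (x₀ + t • eₙ) eₙ eₙ)
      ((fderiv ℝ φ (x₀ + u • eₙ) eₙ) eₙ eₙ) u := by
  have hline : HasDerivAt (fun t : ℝ => x₀ + t • eₙ) eₙ u := by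
    simpa using ((hasDerivAt_id u).smul_const eₙ).const_add x₀
  have hφd :=
    (hφ.differentiable (by simp) (x₀ + u • eₙ)).hasFDerivAt
  have hcomp := hφd.comp_hasDerivAt u hline
  simpa using ((hcomp.clm_apply (hasDerivAt_const u eₙ)).clm_apply (hasDerivAt_const u eₙ))

theorem stmt9 {n : ℕ}
    (τ : EuclideanSpace ℝ (Fin n) →
      (EuclideanSpace ℝ (Fin n) →L[ℝ] EuclideanSpace ℝ (Fin n) →L[ℝ] ℝ))
    (hτ : ContDiff ℝ (⊤ : ℕ∞) τ) (hsym : ∀ z u w, τ z u w = τ z w u)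
    (x₀ y₀ : EuclideanSpace ℝ (Fin n)) (hxy : x₀ ≠ y₀)
    (eₙ : EuclideanSpace ℝ (Fin n)) (heₙ : eₙ = ‖y₀ - x₀‖⁻¹ • (y₀ - x₀)) :
    iteratedDeriv 2 (fun t : ℝ => segE τ (x₀ + t • eₙ) (y₀ - t • eₙ)) 0
      = segE (fun z => fderiv ℝ (fun w => fderiv ℝ τ w eₙ) z eₙ) x₀ y₀ := by
  set L := ‖y₀ - x₀‖ with hLdef
  have hyx0 : y₀ - x₀ ≠ 0 := sub_ne_zero.mpr (Ne.symm hxy)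
  have hL : 0 < L := norm_pos_iff.mpr hyx0
  have hen : ‖eₙ‖ = 1 := by rw [heₙ]; exact norm_smul_inv_norm hyx0
  have hyx : y₀ - x₀ = L • eₙ := by
    rw [heₙ, smul_smul, mul_inv_cancel₀ hL.ne', one_smul]
  set f : ℝ → ℝ := fun u => τ (x₀ + u • eₙ) eₙ eₙ with hfdef
  set f' : ℝ → ℝ := fun u => (fderiv ℝ τ (x₀ + u • eₙ) eₙ) eₙ eₙ with hf'def
  have hfd : ∀ u, HasDerivAt f (f' u) u := fun u => key_deriv τ hτ x₀ eₙ u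
  have hd1 := hτ.fderiv_right (m := (⊤ : ℕ∞)) (by simp)
  have hτ' : ContDiff ℝ (⊤ : ℕ∞) (fun w => fderiv ℝ τ w eₙ) := by
    exact hd1.clm_apply contDiff_const
  have hf'd : ∀ u, HasDerivAt f'
      ((fderiv ℝ (fun w => fderiv ℝ τ w eₙ) (x₀ + u • eₙ) eₙ) eₙ eₙ) u :=
    fun u => key_deriv _ hτ' x₀ eₙ u
  have hlinec : Continuous (fun u : ℝ => x₀ + u • eₙ) :=
    continuous_const.add (continuous_id.smul continuous_const)
  have hfc : Continuous f :=
    ((hτ.continuous.comp hlinec).clm_apply continuous_const).clm_apply continuous_const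
  have hf''c : Continuous (fun u : ℝ =>
      (fderiv ℝ (fun w => fderiv ℝ τ w eₙ) (x₀ + u • eₙ) eₙ) eₙ eₙ) := by
    have hd2c :=
      hτ'.fderiv_right (m := (⊤ : ℕ∞)) (by simp)
    have h1 := hd2c.continuous
    exact (((h1.comp hlinec).clm_apply continuous_const).clm_apply
      continuous_const).clm_apply continuous_const
  set F : ℝ → ℝ := fun t => (∫ u in (0:ℝ)..(L - t), f u) - ∫ u in (0:ℝ)..t, f u with hFdef
  have hG : ∀ t : ℝ, HasDerivAt (fun u => ∫ x in (0:ℝ)..u, f x) (f t) t := fun t =>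
    intervalIntegral.integral_hasDerivAt_right (hfc.intervalIntegrable _ _)
      (hfc.stronglyMeasurableAtFilter _ _) hfc.continuousAt
  have hFd : ∀ t : ℝ, HasDerivAt F (-(f (L - t)) - f t) t := by
    intro t
    have hin : HasDerivAt (fun t : ℝ => L - t) (-1) t := by
      simpa using (hasDerivAt_id t).const_sub L
    have h1 : HasDerivAt (fun t : ℝ => ∫ u in (0:ℝ)..(L - t), f u) (f (L - t) * (-1)) t :=
      (hG (L - t)).comp t hin
    have := h1.sub (hG t)
    rw [hFdef]
    exact this.congr_deriv (by ring)
  have hF' : deriv F = fun t => -(f (L - t)) - f t := funext fun t => (hFd t).deriv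
  -- eventual equality of the two functions near 0
  have heqF : (fun t : ℝ => segE τ (x₀ + t • eₙ) (y₀ - t • eₙ)) =ᶠ[nhds 0] F := by
    filter_upwards [Metric.ball_mem_nhds (0:ℝ) (half_pos hL)] with t ht
    rw [Metric.mem_ball, Real.dist_eq, sub_zero] at ht
    obtain ⟨ht1, ht2⟩ := abs_lt.mp ht
    have h2t : 0 < L - 2 * t := by linarith
    have hd : (y₀ - t • eₙ) - (x₀ + t • eₙ) = (L - 2*t) • eₙ := by
      have h : (y₀ - t • eₙ) - (x₀ + t • eₙ) = (y₀ - x₀) - (2*t) • eₙ := by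
        rw [two_mul, add_smul]; abel
      rw [h, hyx, ← sub_smul]
    have hn : ‖(y₀ - t • eₙ) - (x₀ + t • eₙ)‖ = L - 2*t := by
      rw [hd, norm_smul, hen, mul_one, Real.norm_eq_abs, abs_of_pos h2t]
    have hu : ‖(y₀ - t • eₙ) - (x₀ + t • eₙ)‖⁻¹ • ((y₀ - t • eₙ) - (x₀ + t • eₙ)) = eₙ := by
      rw [hn, hd, smul_smul, inv_mul_cancel₀ h2t.ne', one_smul]
    have hpt : ∀ s : ℝ, x₀ + t • eₙ + s • eₙ = x₀ + (t + s) • eₙ := by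
      intro s; rw [add_smul]; abel
    rw [segE, hu, hn]
    simp only [hpt]
    have hshift : (∫ s in (0:ℝ)..(L - 2*t), f (t + s)) = ∫ u in (t+0)..(t+(L-2*t)), f u :=
      intervalIntegral.integral_comp_add_left f t
    have h1 : (t : ℝ) + 0 = t := by ring
    have h2 : t + (L - 2*t) = L - t := by ring
    rw [h1, h2] at hshift
    have hsplit : (∫ u in (0:ℝ)..t, f u) + ∫ u in t..(L-t), f u = ∫ u in (0:ℝ)..(L-t), f u :=
      intervalIntegral.integral_add_adjacent_intervals (hfc.intervalIntegrable _ _)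
        (hfc.intervalIntegrable _ _)
    show (∫ s in (0:ℝ)..(L - 2*t), f (t + s)) = F t
    rw [hshift]
    show (∫ u in t..(L-t), f u) = (∫ u in (0:ℝ)..(L-t), f u) - ∫ u in (0:ℝ)..t, f u
    linarith
  -- compute second derivative
  have hdd : iteratedDeriv 2 (fun t : ℝ => segE τ (x₀ + t • eₙ) (y₀ - t • eₙ)) 0
      = deriv (deriv F) 0 := by
    simp only [iteratedDeriv_succ, iteratedDeriv_zero]
    exact (heqF.deriv).deriv_eq
  have hin0 : HasDerivAt (fun t : ℝ => L - t) (-1) 0 := by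
    simpa using (hasDerivAt_id (0:ℝ)).const_sub L
  have h1 : HasDerivAt (fun t : ℝ => f (L - t)) (f' (L - 0) * (-1)) 0 :=
    (hfd (L - 0)).comp 0 hin0
  have h2 : HasDerivAt (fun t : ℝ => -(f (L - t)) - f t) (-(f' (L - 0) * (-1)) - f' 0) 0 :=
    h1.neg.sub (hfd 0)
  have hd2 : deriv (deriv F) 0 = f' L - f' 0 := by
    rw [hF', h2.deriv]; ring_nf
  -- RHS via FTC
  have hRHS : segE (fun z => fderiv ℝ (fun w => fderiv ℝ τ w eₙ) z eₙ) x₀ y₀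
      = f' L - f' 0 := by
    rw [segE, ← heₙ, ← hLdef]
    have : (∫ s in (0:ℝ)..L,
        (fderiv ℝ (fun w => fderiv ℝ τ w eₙ) (x₀ + s • eₙ) eₙ) eₙ eₙ) = f' L - f' 0 :=
      intervalIntegral.integral_eq_sub_of_hasDerivAt (fun x _ => hf'd x)
        (hf''c.intervalIntegrable _ _)
    exact this
  rw [hdd, hd2, hRHS]
end

section
/- Let Ω ⊂ ℝⁿ be a bounded strictly convex domain with smooth boundary and φ ∈ C²(Ω̄) with φ > 0 in Ω, φ = 0 on ∂Ω, and ∂φ/∂ν < 0 on ∂Ω (ν the outward unit normal). Let f = -log φ. Then there exist positive constants δ₀ and c₀ such that for every x ∈ Ω with φ(x) < δ₀ and every X ∈ ℝⁿ, the Hessian satisfies ∇²f(x)(X,X) ≥ c₀‖X‖²/φ(x). -/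
/-!
Since `∇²(-log φ)(X, X) = ((Dφ X)² / φ - D²φ(X, X)) / φ` and both sides of the claim are
quadratic in `X`, it suffices to bound `Q(x, u) = (Dφ(x) u)² / φ(x) - D²φ(x)(u, u)` from below
for unit `u` and `x` near `∂Ω`. If this failed, compactness of `Ω̄ × S` would give a limit point
`(y, u)` with `y ∈ ∂Ω`; boundedness of `D²φ` forces `(Dφ u)² ≤ O(φ) → 0`, so `u` is tangent at `y`,
while `Q < o(1)` gives `D²φ(y)(u, u) ≥ 0`, contradicting strict convexity of `∂Ω` at `y`.
-/

open Filter Topology Set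

theorem ContinuousMultilinearMap.map_smul_smul_fin_two {E : Type*} [NormedAddCommGroup E]
    [NormedSpace ℝ E] (T : ContinuousMultilinearMap ℝ (fun _ : Fin 2 => E) ℝ) (r : ℝ) (u : E) :
    T ![r • u, r • u] = r ^ 2 * T ![u, u] := by
  have h : ![r • u, r • u] = fun i => r • ![u, u] i := by
    ext i; fin_cases i <;> rfl
  rw [h, T.map_smul_univ]
  simp [pow_two]

theorem mul_norm_sq_le_of_forall_norm_eq_one {E : Type*} [NormedAddCommGroup E]
    [NormedSpace ℝ E] {Q : E → ℝ} {c : ℝ} (hQ : ∀ (r : ℝ) (u : E), Q (r • u) = r ^ 2 * Q u)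
    (hc : ∀ u : E, ‖u‖ = 1 → c ≤ Q u) (X : E) : c * ‖X‖ ^ 2 ≤ Q X := by
  rcases eq_or_ne X 0 with rfl | hX
  · have hQ0 : Q 0 = 0 := by simpa using hQ 0 0
    simp [hQ0]
  have hX' : ‖X‖ ≠ 0 := norm_ne_zero_iff.2 hX
  calc c * ‖X‖ ^ 2 = ‖X‖ ^ 2 * c := mul_comm _ _
    _ ≤ ‖X‖ ^ 2 * Q (‖X‖⁻¹ • X) := by gcongr; exact hc _ (norm_smul_inv_norm hX)
    _ = Q X := by rw [← hQ, smul_inv_smul₀ hX']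

theorem IsCompact.exists_pos_le_sq_div_sub {α : Type*} [TopologicalSpace α]
    [FirstCountableTopology α] {S : Set α} (hS : IsCompact S) {φ a b : α → ℝ}
    (hφ : ContinuousOn φ S) (ha : ContinuousOn a S) (hb : ContinuousOn b S)
    (hzero : ∀ p ∈ S, φ p = 0 → a p = 0 → b p < 0) :
    ∃ δ > 0, ∃ c > 0, ∀ p ∈ S, 0 < φ p → φ p < δ → c ≤ a p ^ 2 / φ p - b p := by
  obtain ⟨M, hM⟩ := hS.exists_bound_of_continuousOn hb
  by_contra! hcon
  have hseq : ∀ k : ℕ, ∃ p ∈ S, 0 < φ p ∧ φ p < 1 / (k + 1) ∧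
      a p ^ 2 / φ p - b p < 1 / (k + 1) := fun k =>
    hcon _ (by positivity) _ (by positivity)
  choose p hpS hpos hlt hq using hseq
  obtain ⟨p₀, hp₀, ψ, hψ, hlim⟩ := hS.tendsto_subseq hpS
  have hε : Tendsto (fun k => 1 / ((ψ k : ℝ) + 1)) atTop (𝓝 0) :=
    tendsto_one_div_add_atTop_nhds_zero_nat.comp hψ.tendsto_atTop
  have hlimS : Tendsto (p ∘ ψ) atTop (𝓝[S] p₀) :=
    tendsto_nhdsWithin_iff.2 ⟨hlim, Eventually.of_forall fun k => hpS _⟩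
  have hφlim := (hφ p₀ hp₀).tendsto.comp hlimS
  have hφ₀ : φ p₀ = 0 := tendsto_nhds_unique hφlim
    (squeeze_zero (fun k => (hpos _).le) (fun k => (hlt _).le) hε)
  -- `a ^ 2 < φ * (1 / (k + 1) + b) ≤ φ * (1 + M)` along the sequence
  have ha₀ : a p₀ = 0 := by
    have hbound : ∀ k, a (p (ψ k)) ^ 2 ≤ φ (p (ψ k)) * (1 + M) := by
      intro k
      have hk : 1 / ((ψ k : ℝ) + 1) ≤ 1 := by
        rw [div_le_one (by positivity)]; linarith [(ψ k).cast_nonneg (α := ℝ)]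
      have hbM := (le_abs_self _).trans (hM _ (hpS (ψ k)))
      have := hq (ψ k)
      rw [← div_le_iff₀' (hpos _)]
      linarith
    have h := le_of_tendsto_of_tendsto' (((ha p₀ hp₀).tendsto.comp hlimS).pow 2)
      (hφlim.mul_const (1 + M)) hbound
    rw [hφ₀, zero_mul] at h
    exact pow_eq_zero_iff two_ne_zero |>.1 (le_antisymm h (sq_nonneg _))
  have hb₀ : 0 ≤ b p₀ := by
    have hlow : ∀ k, -(1 / ((ψ k : ℝ) + 1)) ≤ b (p (ψ k)) := fun k => by
      have := div_nonneg (sq_nonneg (a (p (ψ k)))) (hpos (ψ k)).le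
      linarith [hq (ψ k)]
    simpa using le_of_tendsto_of_tendsto' hε.neg ((hb p₀ hp₀).tendsto.comp hlimS) hlow
  exact (hzero p₀ hp₀ hφ₀ ha₀).not_ge hb₀

section

variable {E : Type*} [NormedAddCommGroup E] [NormedSpace ℝ E] {φ : E → ℝ}

theorem iteratedFDeriv_two_neg_log_apply {x : E} (hφ : ContDiffAt ℝ 2 φ x) (hx : φ x ≠ 0)
    (X : E) :
    iteratedFDeriv ℝ 2 (fun z => -Real.log (φ z)) x ![X, X] =
      ((fderiv ℝ φ x X) ^ 2 / φ x - iteratedFDeriv ℝ 2 φ x ![X, X]) / φ x := by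
  have hderiv : fderiv ℝ (fun z => -Real.log (φ z)) =ᶠ[𝓝 x]
      fun y => (-(φ y)⁻¹) • fderiv ℝ φ y := by
    filter_upwards [hφ.eventually (by simp), hφ.continuousAt.eventually_ne hx] with y hy hy0
    rw [neg_smul]
    exact (((hy.differentiableAt two_ne_zero).hasFDerivAt.log hy0).neg).fderiv
  have hinv : HasFDerivAt (fun y => -(φ y)⁻¹) (((φ x) ^ 2)⁻¹ • fderiv ℝ φ x) x := by
    have h : HasDerivAt (fun t : ℝ => -t⁻¹) ((φ x ^ 2)⁻¹) (φ x) :=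
      (hasDerivAt_inv hx).neg.congr_deriv (by simp)
    exact h.comp_hasFDerivAt x (hφ.differentiableAt two_ne_zero).hasFDerivAt
  have hD : HasFDerivAt (fderiv ℝ φ) (fderiv ℝ (fderiv ℝ φ) x) x :=
    ((hφ.fderiv_right (m := 1) le_rfl).differentiableAt one_ne_zero).hasFDerivAt
  have hHess : HasFDerivAt (fun y => (-(φ y)⁻¹) • fderiv ℝ φ y) _ x := hinv.smul hD
  rw [iteratedFDeriv_two_apply, iteratedFDeriv_two_apply, hderiv.fderiv_eq, hHess.fderiv]
  simp only [Matrix.cons_val_zero, Matrix.cons_val_one, add_apply,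
    smul_apply, ContinuousLinearMap.smulRight_apply, smul_eq_mul]
  field_simp
  ring

theorem iteratedFDerivWithin_two_eq_iteratedFDeriv {s : Set E} {y : E} (hs : UniqueDiffOn ℝ s)
    (hy : y ∈ s) (hφ : EqOn (fderivWithin ℝ φ s) (fderiv ℝ φ) s)
    (hd : DifferentiableAt ℝ (fderiv ℝ φ) y) :
    iteratedFDerivWithin ℝ 2 φ s y = iteratedFDeriv ℝ 2 φ y := by
  ext m
  rw [iteratedFDerivWithin_two_apply φ hs hy, iteratedFDeriv_two_apply,
    fderivWithin_congr' hφ hy, hd.fderivWithin (hs y hy)]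

variable {Ω : Set E}

theorem fderivWithin_closure_eqOn (hopen : IsOpen Ω) (hU : UniqueDiffOn ℝ (closure Ω))
    (hφ : DifferentiableOn ℝ φ (closure Ω)) (hφν : ∀ x ∈ frontier Ω, fderiv ℝ φ x ≠ 0) :
    EqOn (fderivWithin ℝ φ (closure Ω)) (fderiv ℝ φ) (closure Ω) := by
  intro y hy
  refine DifferentiableAt.fderivWithin ?_ (hU y hy)
  by_cases hyΩ : y ∈ Ω
  · exact hφ.differentiableAt (mem_of_superset (hopen.mem_nhds hyΩ) subset_closure)
  · by_contra hnd
    exact hφν y (hopen.frontier_eq ▸ ⟨hy, hyΩ⟩) (fderiv_zero_of_not_differentiableAt hnd)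

theorem exists_pos_le_sq_div_sub_iteratedFDeriv [ProperSpace E] (hopen : IsOpen Ω)
    (hbd : Bornology.IsBounded Ω) (hU : UniqueDiffOn ℝ (closure Ω))
    (hφC2 : ContDiffOn ℝ 2 φ (closure Ω)) (hφpos : ∀ x ∈ Ω, 0 < φ x)
    (hφν : ∀ x ∈ frontier Ω, fderiv ℝ φ x ≠ 0)
    (hstrict : ∀ x ∈ frontier Ω, ∀ X : E, X ≠ 0 →
      fderiv ℝ φ x X = 0 → iteratedFDeriv ℝ 2 φ x ![X, X] < 0) :
    ∃ δ > 0, ∃ c > 0, ∀ x ∈ Ω, φ x < δ → ∀ u : E, ‖u‖ = 1 →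
      c ≤ (fderiv ℝ φ x u) ^ 2 / φ x - iteratedFDeriv ℝ 2 φ x ![u, u] := by
  set s := closure Ω
  set S := s ×ˢ Metric.sphere (0 : E) 1
  have hD1 := fderivWithin_closure_eqOn hopen hU (hφC2.differentiableOn two_ne_zero) hφν
  have hfst : MapsTo Prod.fst S s := fun p hp => hp.1
  have hzero : ∀ p ∈ S, φ p.1 = 0 → fderiv ℝ φ p.1 p.2 = 0 →
      iteratedFDerivWithin ℝ 2 φ s p.1 ![p.2, p.2] < 0 := by
    rintro ⟨y, X⟩ ⟨hy, hX⟩ hφy hDy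
    have hyf : y ∈ frontier Ω := hopen.frontier_eq ▸ ⟨hy, fun hyΩ => (hφpos y hyΩ).ne' hφy⟩
    have hlt := hstrict y hyf X (ne_zero_of_mem_unit_sphere ⟨X, hX⟩) hDy
    -- otherwise `iteratedFDeriv ℝ 2 φ y` would be the junk value `0`
    have hd : DifferentiableAt ℝ (fderiv ℝ φ) y := by
      by_contra hd
      rw [iteratedFDeriv_two_apply, fderiv_zero_of_not_differentiableAt hd] at hlt
      simp at hlt
    rwa [iteratedFDerivWithin_two_eq_iteratedFDeriv hU hy hD1 hd]
  obtain ⟨δ, hδ, c, hc, hQ⟩ :=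
    (hbd.isCompact_closure.prod (isCompact_sphere 0 1)).exists_pos_le_sq_div_sub
    (hφC2.continuousOn.comp continuousOn_fst hfst)
    ((((hφC2.continuousOn_fderivWithin hU one_le_two).congr hD1.symm).comp continuousOn_fst
      hfst).clm_apply continuousOn_snd)
    (((hφC2.continuousOn_iteratedFDerivWithin le_rfl hU).comp continuousOn_fst hfst).eval
      (by fun_prop)) hzero
  refine ⟨δ, hδ, c, hc, fun x hx hφx u hu => ?_⟩
  have hxs : x ∈ s := subset_closure hx
  have h := hQ (x, u) ⟨hxs, mem_sphere_zero_iff_norm.2 hu⟩ (hφpos x hx) hφx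
  dsimp only [Function.comp_apply] at h
  rwa [iteratedFDerivWithin_eq_iteratedFDeriv hU
    (hφC2.contDiffAt (mem_of_superset (hopen.mem_nhds hx) subset_closure)) hxs] at h

end

theorem stmt10_general {n : ℕ} (Ω : Set (EuclideanSpace ℝ (Fin n)))
    (hopen : IsOpen Ω) (hbd : Bornology.IsBounded Ω) (hconv : Convex ℝ Ω)
    (φ : EuclideanSpace ℝ (Fin n) → ℝ)
    (hφC2 : ContDiffOn ℝ 2 φ (closure Ω))
    (hφpos : ∀ x ∈ Ω, 0 < φ x)
    (hφν : ∀ x ∈ frontier Ω, fderiv ℝ φ x ≠ 0)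
    (hstrict : ∀ x ∈ frontier Ω, ∀ X : EuclideanSpace ℝ (Fin n), X ≠ 0 →
      fderiv ℝ φ x X = 0 → iteratedFDeriv ℝ 2 φ x ![X, X] < 0) :
    ∃ δ₀ > (0:ℝ), ∃ c₀ > (0:ℝ), ∀ x ∈ Ω, φ x < δ₀ →
      ∀ X : EuclideanSpace ℝ (Fin n),
        iteratedFDeriv ℝ 2 (fun z => -Real.log (φ z)) x ![X, X] ≥ c₀ * ‖X‖ ^ 2 / φ x := by
  rcases Ω.eq_empty_or_nonempty with rfl | hΩ
  · exact ⟨1, one_pos, 1, one_pos, fun x hx => hx.elim⟩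
  have hU : UniqueDiffOn ℝ (closure Ω) :=
    uniqueDiffOn_convex hconv.closure (hΩ.mono (interior_maximal subset_closure hopen))
  obtain ⟨δ₀, hδ₀, c₀, hc₀, hQ⟩ :=
    exists_pos_le_sq_div_sub_iteratedFDeriv hopen hbd hU hφC2 hφpos hφν hstrict
  refine ⟨δ₀, hδ₀, c₀, hc₀, fun x hx hφx X => ?_⟩
  have hφC2x : ContDiffAt ℝ 2 φ x :=
    hφC2.contDiffAt (mem_of_superset (hopen.mem_nhds hx) subset_closure)
  rw [iteratedFDeriv_two_neg_log_apply hφC2x (hφpos x hx).ne', ge_iff_le,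
    div_le_div_iff_of_pos_right (hφpos x hx)]
  refine mul_norm_sq_le_of_forall_norm_eq_one (fun r u => ?_) (hQ x hx hφx) X
  rw [map_smul, smul_eq_mul, ContinuousMultilinearMap.map_smul_smul_fin_two]
  ring

theorem stmt10 {n : ℕ} (Ω : Set (EuclideanSpace ℝ (Fin n)))
    (hopen : IsOpen Ω) (hbd : Bornology.IsBounded Ω) (hconv : Convex ℝ Ω)
    (φ : EuclideanSpace ℝ (Fin n) → ℝ)
    (hφC2 : ContDiffOn ℝ 2 φ (closure Ω))
    (hφpos : ∀ x ∈ Ω, 0 < φ x)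
    (hφ0 : ∀ x ∈ frontier Ω, φ x = 0)
    (hφν : ∀ x ∈ frontier Ω, fderiv ℝ φ x ≠ 0)
    (hstrict : ∀ x ∈ frontier Ω, ∀ X : EuclideanSpace ℝ (Fin n), X ≠ 0 →
      fderiv ℝ φ x X = 0 → iteratedFDeriv ℝ 2 φ x ![X, X] < 0) :
    ∃ δ₀ > (0:ℝ), ∃ c₀ > (0:ℝ), ∀ x ∈ Ω, φ x < δ₀ →
      ∀ X : EuclideanSpace ℝ (Fin n),
        iteratedFDeriv ℝ 2 (fun z => -Real.log (φ z)) x ![X, X] ≥ c₀ * ‖X‖ ^ 2 / φ x :=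
  stmt10_general Ω hopen hbd hconv φ hφC2 hφpos hφν hstrict
end

section
/- Under the hypotheses of the defining-function lemma (Ω bounded strictly convex with smooth boundary, φ a C² defining function, f = -log φ with ∇²f(x) ≥ (c₀/φ(x))·Id near ∂Ω), if sequences x_k → x₀ ∈ Ω and y_k → y₀ ∈ ∂Ω with x_k, y_k ∈ Ω, then the line segment energy E_f(x_k, y_k) = ∫₀^{‖y_k-x_k‖} ∇²f(x_k + sN(x_k,y_k))(N,N) ds tends to +∞. -/
/-! By the fundamental theorem of calculus along the segment, with `N` the unit direction from
`x` to `y`, `E_f(x, y) = ∂_N f(y) - ∂_N f(x) = -∂_N φ(y) / φ(y) + ∂_N φ(x) / φ(x)`. Along the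
sequences the second term converges, while `φ(y_k) → 0` and `-∂_N φ(y_k)` tends to
`∂φ(y₀)(x₀ - y₀) / ‖x₀ - y₀‖`. That inward derivative is positive: it is `≥ 0` because `y₀`
minimises `φ` on `Ω ∪ {y₀}`, and if it vanished, the strict tangential concavity at `y₀` would
make `t ↦ ∂φ(y₀ + t(x₀ - y₀))(x₀ - y₀)` negative for small `t > 0`, so `φ` would become negative
on the segment inside `Ω`. -/

noncomputable def segEf {n : ℕ} (f : EuclideanSpace ℝ (Fin n) → ℝ)
    (x y : EuclideanSpace ℝ (Fin n)) : ℝ :=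
  ∫ s in (0:ℝ)..‖y - x‖,
    iteratedFDeriv ℝ 2 f (x + s • (‖y - x‖⁻¹ • (y - x)))
      ![‖y - x‖⁻¹ • (y - x), ‖y - x‖⁻¹ • (y - x)]

open Filter Set Topology

theorem tendsto_inv_apply_atTop_of_eq_zero {X : Type*} [TopologicalSpace X] {φ : X → ℝ}
    {Ω : Set X} {z : X} (hφ : ContinuousWithinAt φ Ω z) (hz : φ z = 0)
    (hpos : ∀ x ∈ Ω, 0 < φ x) {ι : Type*} {l : Filter ι} {zk : ι → X}
    (hzk : ∀ k, zk k ∈ Ω) (hlim : Tendsto zk l (𝓝 z)) :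
    Tendsto (fun k => (φ (zk k))⁻¹) l atTop := by
  have hzkΩ : Tendsto zk l (𝓝[Ω] z) :=
    tendsto_nhdsWithin_iff.2 ⟨hlim, Eventually.of_forall hzk⟩
  refine Tendsto.inv_tendsto_nhdsGT_zero (tendsto_nhdsWithin_iff.2 ⟨?_, ?_⟩)
  · simpa [hz, Function.comp_def] using hφ.tendsto.comp hzkΩ
  · exact Eventually.of_forall fun k => hpos _ (hzk k)

theorem exists_lt_right_of_deriv_eq_zero_of_deriv_neg {g u : ℝ → ℝ} {b a c : ℝ} (hba : b < a)
    (hg : ContinuousOn g (Icc b a)) (hgu : ∀ t ∈ Ioo b a, HasDerivAt g (u t) t)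
    (hub : u b = 0) (hu : HasDerivAt u c b) (hc : c < 0) : ∃ t ∈ Ioc b a, g t < g b := by
  have hneg : ∀ᶠ t in 𝓝[>] b, u t < 0 := by
    filter_upwards [nhdsWithin_le_nhds
        (eventually_nhdsWithin_sign_eq_of_deriv_neg (hu.deriv ▸ hc) hub),
      self_mem_nhdsWithin] with t hsign (hbt : b < t)
    exact sign_eq_neg_one_iff.1 (hsign.trans (sign_neg (sub_neg.2 hbt)))
  obtain ⟨d, hbd, hd⟩ := (mem_nhdsGT_iff_exists_Ioo_subset' hba).1 hneg
  have hbt : b < min d a := lt_min hbd hba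
  have hanti : StrictAntiOn g (Icc b (min d a)) := by
    refine strictAntiOn_of_deriv_neg (convex_Icc _ _)
      (hg.mono (Icc_subset_Icc_right (min_le_right _ _))) fun t ht => ?_
    rw [interior_Icc] at ht
    rw [(hgu t ⟨ht.1, ht.2.trans_le (min_le_right _ _)⟩).deriv]
    exact hd ⟨ht.1, ht.2.trans_le (min_le_left _ _)⟩
  exact ⟨min d a, ⟨hbt, min_le_right _ _⟩,
    hanti (left_mem_Icc.2 hbt.le) (right_mem_Icc.2 hbt.le) hbt⟩

section NormedSpace

variable {E F : Type*} [NormedAddCommGroup E] [NormedSpace ℝ E]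
  [NormedAddCommGroup F] [NormedSpace ℝ F]

theorem HasFDerivAt.hasDerivAt_comp_add_smul {g : E → F} {g' : E →L[ℝ] F} {x v : E} {t : ℝ}
    (h : HasFDerivAt g g' (x + t • v)) : HasDerivAt (fun s : ℝ => g (x + s • v)) (g' v) t := by
  simpa [Function.comp_def] using
    h.comp_hasDerivAt t (((hasDerivAt_id t).smul_const v).const_add x)

theorem iteratedFDeriv_two_apply_self (f : E → F) (x v : E) :
    iteratedFDeriv ℝ 2 f x ![v, v] = fderiv ℝ (fderiv ℝ f) x v v := by
  simp only [iteratedFDeriv_two_apply, Matrix.cons_val_zero, Matrix.cons_val_one]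

theorem integral_iteratedFDeriv_two_comp_add_smul [CompleteSpace F] {f : E → F} {s : Set E}
    (hs : IsOpen s) (hf : ContDiffOn ℝ 2 f s) {x v : E} {L : ℝ} (hL : 0 ≤ L)
    (hseg : ∀ t ∈ Icc 0 L, x + t • v ∈ s) :
    ∫ t in (0:ℝ)..L, iteratedFDeriv ℝ 2 f (x + t • v) ![v, v] =
      fderiv ℝ f (x + L • v) v - fderiv ℝ f x v := by
  have hdf : ContDiffOn ℝ 1 (fderiv ℝ f) s := hf.fderiv_of_isOpen hs le_rfl
  simp only [iteratedFDeriv_two_apply_self]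
  have hderiv : ∀ t ∈ uIcc 0 L, HasDerivAt (fun t => fderiv ℝ f (x + t • v) v)
      (fderiv ℝ (fderiv ℝ f) (x + t • v) v v) t := by
    intro t ht
    rw [uIcc_of_le hL] at ht
    have hdiff := (hdf.differentiableOn one_ne_zero).differentiableAt (hs.mem_nhds (hseg t ht))
    simpa using hdiff.hasFDerivAt.hasDerivAt_comp_add_smul.clm_apply (hasDerivAt_const t v)
  have hcont : ContinuousOn (fun t => fderiv ℝ (fderiv ℝ f) (x + t • v) v v) (uIcc 0 L) := by
    rw [uIcc_of_le hL]
    have hd2 := (hdf.continuousOn_fderiv_of_isOpen hs le_rfl).comp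
      (by fun_prop : Continuous fun t : ℝ => x + t • v).continuousOn hseg
    exact (hd2.clm_apply continuousOn_const).clm_apply continuousOn_const
  simpa using intervalIntegral.integral_eq_sub_of_hasDerivAt hderiv hcont.intervalIntegrable

theorem fderiv_neg_log_apply {φ : E → ℝ} {z : E} (hφ : DifferentiableAt ℝ φ z) (hz : φ z ≠ 0)
    (v : E) : fderiv ℝ (fun w => -Real.log (φ w)) z v = -((φ z)⁻¹ * fderiv ℝ φ z v) := by
  have h : HasFDerivAt (fun w => -Real.log (φ w)) (-((φ z)⁻¹ • fderiv ℝ φ z)) z :=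
    (hφ.hasFDerivAt.log hz).neg
  simp [h.fderiv]

theorem tendsto_fderiv_apply_of_mem_closure {φ : E → F} {Ω : Set E} (hopen : IsOpen Ω)
    (hconv : Convex ℝ Ω) (hne : Ω.Nonempty) (hφ : ContDiffOn ℝ 1 φ (closure Ω)) {z : E}
    (hz : z ∈ closure Ω) (hdz : DifferentiableAt ℝ φ z) {ι : Type*} {l : Filter ι}
    {zk vk : ι → E} {v : E} (hzk : ∀ k, zk k ∈ Ω) (hlim : Tendsto zk l (𝓝 z))
    (hv : Tendsto vk l (𝓝 v)) :
    Tendsto (fun k => fderiv ℝ φ (zk k) (vk k)) l (𝓝 (fderiv ℝ φ z v)) := by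
  have hUD : UniqueDiffOn ℝ (closure Ω) :=
    uniqueDiffOn_convex hconv.closure
      ((hopen.interior_eq ▸ hne).mono (interior_mono subset_closure))
  have hcont : ContinuousWithinAt (fderiv ℝ φ) Ω z :=
    ((hφ.continuousOn_fderivWithin hUD le_rfl z hz).mono subset_closure).congr
      (fun y hy => (fderivWithin_of_mem_nhds
        (mem_of_superset (hopen.mem_nhds hy) subset_closure)).symm)
      (hdz.fderivWithin (hUD z hz)).symm
  have hzkΩ : Tendsto zk l (𝓝[Ω] z) :=
    tendsto_nhdsWithin_iff.2 ⟨hlim, Eventually.of_forall hzk⟩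
  exact (isBoundedBilinearMap_apply.continuous.tendsto _).comp
    ((hcont.tendsto.comp hzkΩ).prodMk_nhds hv)

theorem fderiv_apply_sub_pos_of_eq_zero_of_mem_closure {φ : E → ℝ} {Ω : Set E}
    (hopen : IsOpen Ω) (hconv : Convex ℝ Ω) (hφc : ContinuousOn φ (closure Ω))
    (hφd : DifferentiableOn ℝ φ Ω) (hφpos : ∀ x ∈ Ω, 0 < φ x) {x₀ y₀ : E} (hx₀ : x₀ ∈ Ω)
    (hy₀ : y₀ ∈ closure Ω) (hφy₀ : φ y₀ = 0) (hdy₀ : DifferentiableAt ℝ φ y₀)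
    (hstrict : fderiv ℝ φ y₀ (x₀ - y₀) = 0 →
      iteratedFDeriv ℝ 2 φ y₀ ![x₀ - y₀, x₀ - y₀] < 0) :
    0 < fderiv ℝ φ y₀ (x₀ - y₀) := by
  set X := x₀ - y₀
  have hseg : ∀ t ∈ Ioc (0 : ℝ) 1, y₀ + t • X ∈ Ω := fun t ht => by
    simpa [hopen.interior_eq] using
      hconv.add_smul_sub_mem_interior' hy₀ (hopen.interior_eq.symm ▸ hx₀) ht
  have hnonneg : 0 ≤ fderiv ℝ φ y₀ X := by
    have hmin : IsMinOn φ (insert y₀ Ω) y₀ := isMinOn_iff.2 fun z hz => by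
      rcases hz with rfl | hz
      · exact le_rfl
      · exact hφy₀ ▸ (hφpos z hz).le
    refine hmin.localize.hasFDerivWithinAt_nonneg hdy₀.hasFDerivAt.hasFDerivWithinAt
      (sub_mem_posTangentConeAt_of_segment_subset ?_)
    rw [segment_eq_image']
    rintro _ ⟨t, ht, rfl⟩
    rcases ht.1.eq_or_lt with rfl | ht0
    · simp
    · exact Or.inr (hseg t ⟨ht0, ht.2⟩)
  refine hnonneg.lt_of_ne fun hzero => ?_
  have hH := hstrict hzero.symm
  rw [iteratedFDeriv_two_apply_self] at hH
  have hdf : DifferentiableAt ℝ (fderiv ℝ φ) y₀ := by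
    by_contra h
    simp [fderiv_zero_of_not_differentiableAt h] at hH
  have hu : HasDerivAt (fun t : ℝ => fderiv ℝ φ (y₀ + t • X) X)
      (fderiv ℝ (fderiv ℝ φ) y₀ X X) 0 := by
    have h0 : HasFDerivAt (fderiv ℝ φ) (fderiv ℝ (fderiv ℝ φ) y₀) (y₀ + (0 : ℝ) • X) := by
      simpa using hdf.hasFDerivAt
    simpa using h0.hasDerivAt_comp_add_smul.clm_apply (hasDerivAt_const (0 : ℝ) X)
  have hgc : ContinuousOn (fun t : ℝ => φ (y₀ + t • X)) (Icc 0 1) :=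
    hφc.comp (by fun_prop) fun t ht => hconv.closure.add_smul_sub_mem hy₀ (subset_closure hx₀) ht
  have hgu : ∀ t ∈ Ioo (0 : ℝ) 1, HasDerivAt (fun t : ℝ => φ (y₀ + t • X))
      (fderiv ℝ φ (y₀ + t • X) X) t := fun t ht =>
    (hφd.differentiableAt (hopen.mem_nhds (hseg t ⟨ht.1, ht.2.le⟩))).hasFDerivAt
      |>.hasDerivAt_comp_add_smul
  obtain ⟨t, ht, hlt⟩ := exists_lt_right_of_deriv_eq_zero_of_deriv_neg one_pos hgc hgu
    (by simpa using hzero.symm) hu hH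
  simp only [zero_smul, add_zero, hφy₀] at hlt
  exact (hφpos _ (hseg t ht)).not_gt hlt

end NormedSpace

section Euclidean

variable {n : ℕ} {Ω : Set (EuclideanSpace ℝ (Fin n))}

theorem segEf_eq_fderiv_sub (hopen : IsOpen Ω) (hconv : Convex ℝ Ω)
    {f : EuclideanSpace ℝ (Fin n) → ℝ} (hf : ContDiffOn ℝ 2 f Ω)
    {x y : EuclideanSpace ℝ (Fin n)} (hx : x ∈ Ω) (hy : y ∈ Ω) (hxy : x ≠ y) :
    segEf f x y =
      fderiv ℝ f y (‖y - x‖⁻¹ • (y - x)) - fderiv ℝ f x (‖y - x‖⁻¹ • (y - x)) := by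
  have hL : ‖y - x‖ ≠ 0 := norm_ne_zero_iff.2 (sub_ne_zero.2 hxy.symm)
  have hend : x + ‖y - x‖ • (‖y - x‖⁻¹ • (y - x)) = y := by
    rw [smul_smul, mul_inv_cancel₀ hL, one_smul, add_sub_cancel]
  rw [segEf, integral_iteratedFDeriv_two_comp_add_smul hopen hf (norm_nonneg _), hend]
  intro t ht
  rw [smul_smul, ← div_eq_mul_inv]
  exact hconv.add_smul_sub_mem hx hy
    ⟨div_nonneg ht.1 (norm_nonneg _), div_le_one_of_le₀ ht.2 (norm_nonneg _)⟩

theorem segEf_neg_log_eq (hopen : IsOpen Ω) (hconv : Convex ℝ Ω)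
    {φ : EuclideanSpace ℝ (Fin n) → ℝ} (hφ : ContDiffOn ℝ 2 φ Ω) (hφpos : ∀ x ∈ Ω, 0 < φ x)
    {x y : EuclideanSpace ℝ (Fin n)} (hx : x ∈ Ω) (hy : y ∈ Ω) (hxy : x ≠ y) :
    segEf (fun z => -Real.log (φ z)) x y =
      (φ y)⁻¹ * -fderiv ℝ φ y (‖y - x‖⁻¹ • (y - x)) +
        (φ x)⁻¹ * fderiv ℝ φ x (‖y - x‖⁻¹ • (y - x)) := by
  have hdiff : ∀ z ∈ Ω, DifferentiableAt ℝ φ z := fun z hz =>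
    (hφ.differentiableOn two_ne_zero).differentiableAt (hopen.mem_nhds hz)
  rw [segEf_eq_fderiv_sub hopen hconv (hφ.log fun z hz => (hφpos z hz).ne').neg hx hy hxy,
    fderiv_neg_log_apply (hdiff y hy) (hφpos y hy).ne',
    fderiv_neg_log_apply (hdiff x hx) (hφpos x hx).ne']
  ring

theorem tendsto_segEf_neg_log_atTop (hopen : IsOpen Ω) (hconv : Convex ℝ Ω)
    {φ : EuclideanSpace ℝ (Fin n) → ℝ} (hφ : ContDiffOn ℝ 2 φ (closure Ω))
    (hφpos : ∀ x ∈ Ω, 0 < φ x) {x₀ y₀ : EuclideanSpace ℝ (Fin n)} (hx₀ : x₀ ∈ Ω)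
    (hy₀ : y₀ ∈ closure Ω) (hφy₀ : φ y₀ = 0) (hdy₀ : DifferentiableAt ℝ φ y₀)
    (hinward : 0 < fderiv ℝ φ y₀ (x₀ - y₀)) {ι : Type*} {l : Filter ι}
    {xk yk : ι → EuclideanSpace ℝ (Fin n)} (hxk : ∀ k, xk k ∈ Ω) (hyk : ∀ k, yk k ∈ Ω)
    (hxlim : Tendsto xk l (𝓝 x₀)) (hylim : Tendsto yk l (𝓝 y₀)) :
    Tendsto (fun k => segEf (fun z => -Real.log (φ z)) (xk k) (yk k)) l atTop := by
  have hΩφ : ContDiffOn ℝ 2 φ Ω := hφ.mono subset_closure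
  have hC1 : ContDiffOn ℝ 1 φ (closure Ω) := hφ.of_le one_le_two
  have hdx₀ : DifferentiableAt ℝ φ x₀ :=
    (hΩφ.differentiableOn two_ne_zero).differentiableAt (hopen.mem_nhds hx₀)
  have hxy : x₀ - y₀ ≠ 0 := fun h => by simp [h] at hinward
  have hyx : y₀ - x₀ ≠ 0 := by rwa [← neg_sub, neg_ne_zero]
  have hdir : Tendsto (fun k => ‖yk k - xk k‖⁻¹ • (yk k - xk k)) l
      (𝓝 (‖y₀ - x₀‖⁻¹ • (y₀ - x₀))) :=
    ((hylim.sub hxlim).norm.inv₀ (norm_ne_zero_iff.2 hyx)).smul (hylim.sub hxlim)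
  have hslope : 0 < -fderiv ℝ φ y₀ (‖y₀ - x₀‖⁻¹ • (y₀ - x₀)) := by
    rw [map_smul, ← neg_sub x₀ y₀, map_neg, smul_eq_mul, norm_neg, mul_neg, neg_neg]
    exact mul_pos (inv_pos.2 (norm_pos_iff.2 hxy)) hinward
  have hblow := (tendsto_inv_apply_atTop_of_eq_zero
    ((hφ.continuousOn y₀ hy₀).mono subset_closure) hφy₀ hφpos hyk hylim).atTop_mul_pos hslope
    (tendsto_fderiv_apply_of_mem_closure hopen hconv ⟨x₀, hx₀⟩ hC1 hy₀ hdy₀ hyk hylim hdir).neg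
  have hbdd := ((hdx₀.continuousAt.tendsto.comp hxlim).inv₀ (hφpos x₀ hx₀).ne').mul
    (tendsto_fderiv_apply_of_mem_closure hopen hconv ⟨x₀, hx₀⟩ hC1 (subset_closure hx₀) hdx₀
      hxk hxlim hdir)
  refine (hblow.atTop_add hbdd).congr' ?_
  filter_upwards [(hylim.sub hxlim).eventually_ne hyx] with k hk
  exact (segEf_neg_log_eq hopen hconv hΩφ hφpos (hxk k) (hyk k)
    fun h => hk (by rw [h, sub_self])).symm

end Euclidean

theorem stmt11_general {n : ℕ} (Ω : Set (EuclideanSpace ℝ (Fin n)))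
    (hopen : IsOpen Ω) (hconv : Convex ℝ Ω)
    (φ : EuclideanSpace ℝ (Fin n) → ℝ)
    (hφC2 : ContDiffOn ℝ 2 φ (closure Ω))
    (hφpos : ∀ x ∈ Ω, 0 < φ x)
    (hφ0 : ∀ x ∈ frontier Ω, φ x = 0)
    (hφν : ∀ x ∈ frontier Ω, fderiv ℝ φ x ≠ 0)
    (hstrict : ∀ x ∈ frontier Ω, ∀ X : EuclideanSpace ℝ (Fin n), X ≠ 0 →
      fderiv ℝ φ x X = 0 → iteratedFDeriv ℝ 2 φ x ![X, X] < 0)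
    (xk yk : ℕ → EuclideanSpace ℝ (Fin n))
    (hxk : ∀ k, xk k ∈ Ω) (hyk : ∀ k, yk k ∈ Ω)
    (x₀ y₀ : EuclideanSpace ℝ (Fin n))
    (hx₀ : x₀ ∈ Ω) (hy₀ : y₀ ∈ frontier Ω)
    (hxlim : Filter.Tendsto xk Filter.atTop (nhds x₀))
    (hylim : Filter.Tendsto yk Filter.atTop (nhds y₀)) :
    Filter.Tendsto (fun k => segEf (fun z => -Real.log (φ z)) (xk k) (yk k))
      Filter.atTop Filter.atTop := by
  have hdy₀ : DifferentiableAt ℝ φ y₀ := by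
    by_contra h
    exact hφν y₀ hy₀ (fderiv_zero_of_not_differentiableAt h)
  have hxy₀ : x₀ - y₀ ≠ 0 := sub_ne_zero.2 fun h => (hφpos x₀ hx₀).ne' (h ▸ hφ0 y₀ hy₀)
  have hinward : 0 < fderiv ℝ φ y₀ (x₀ - y₀) :=
    fderiv_apply_sub_pos_of_eq_zero_of_mem_closure hopen hconv hφC2.continuousOn
      ((hφC2.mono subset_closure).differentiableOn two_ne_zero) hφpos hx₀
      (frontier_subset_closure hy₀) (hφ0 y₀ hy₀) hdy₀ (hstrict y₀ hy₀ _ hxy₀)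
  exact tendsto_segEf_neg_log_atTop hopen hconv hφC2 hφpos hx₀ (frontier_subset_closure hy₀)
    (hφ0 y₀ hy₀) hdy₀ hinward hxk hyk hxlim hylim

theorem stmt11 {n : ℕ} (Ω : Set (EuclideanSpace ℝ (Fin n)))
    (hopen : IsOpen Ω) (hbd : Bornology.IsBounded Ω) (hconv : Convex ℝ Ω)
    (φ : EuclideanSpace ℝ (Fin n) → ℝ)
    (hφC2 : ContDiffOn ℝ 2 φ (closure Ω))
    (hφpos : ∀ x ∈ Ω, 0 < φ x)
    (hφ0 : ∀ x ∈ frontier Ω, φ x = 0)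
    (hφν : ∀ x ∈ frontier Ω, fderiv ℝ φ x ≠ 0)
    (hstrict : ∀ x ∈ frontier Ω, ∀ X : EuclideanSpace ℝ (Fin n), X ≠ 0 →
      fderiv ℝ φ x X = 0 → iteratedFDeriv ℝ 2 φ x ![X, X] < 0)
    (xk yk : ℕ → EuclideanSpace ℝ (Fin n))
    (hxk : ∀ k, xk k ∈ Ω) (hyk : ∀ k, yk k ∈ Ω)
    (x₀ y₀ : EuclideanSpace ℝ (Fin n))
    (hx₀ : x₀ ∈ Ω) (hy₀ : y₀ ∈ frontier Ω)
    (hxlim : Filter.Tendsto xk Filter.atTop (nhds x₀))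
    (hylim : Filter.Tendsto yk Filter.atTop (nhds y₀)) :
    Filter.Tendsto (fun k => segEf (fun z => -Real.log (φ z)) (xk k) (yk k))
      Filter.atTop Filter.atTop :=
  stmt11_general Ω hopen hconv φ hφC2 hφpos hφ0 hφν hstrict xk yk hxk hyk x₀ y₀ hx₀ hy₀ hxlim hylim
end
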